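/- Let ρ > 1, μ ∈ (0,1], let I be an open interval containing [p₁,p₂], and p₀ ∈ [p₁,p₂]. Suppose ψ satisfies Assumption (P_{p₀,ρ}) on I (i.e. ψ ∈ C¹(I) ∩ C²(I∖{p₀}), ψ'(p) = |p−p₀|^{ρ−1} ψ̃(p) with |ψ̃| continuous and nonvanishing on I), and that ψ' is monotone on each side of p₀. Suppose U satisfies Assumption (A_{p₁,μ}) (U(p) = (p−p₁)^{μ−1} ũ(p) with ũ continuous on [p₁,p₂], differentiable on (p₁,p₂), ũ' ∈ L¹, ũ(p₁) ≠ 0 if μ ≠ 1). Then for all ω > 0, |∫_{p₁}^{p₂} U(p) e^{iωψ(p)} dp| ≤ [(3/μ)‖ũ‖_∞ + (8‖ũ‖_∞ + 2‖ũ'‖_{L¹})·m^{−1}] · ω^{−μ/ρ}, where m = min_{[p₁,p₂]} |ψ̃|. -/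

import Mathlib

/-!
Write `M = ‖ũ‖_∞`, `m = min |ψ̃|` and split `[p₁, p₂]` at the scale `δ = ω ^ (-1 / ρ)`.
On the windows `[p₁, p₁ + δ]` and `[p₀ - δ, p₀ + δ]` the integrand is estimated trivially,
at a cost of `M δ^μ / μ` and `2 M δ^μ`.
Off the windows `|ψ'| ≥ δ^(ρ-1) m` and `ψ'` is monotone, so integrating by parts against
`exp (i ω ψ)` (van der Corput) leaves `1 / ψ'`, whose total variation is at most
`(δ^(ρ-1) m)⁻¹`; each of the two remaining pieces is then at most
`(ω δ^(ρ-1) m)⁻¹ δ^(μ-1) (4 M + ‖ũ'‖₁)`, which is `δ^μ (4 M + ‖ũ'‖₁) / m` because `ω δ^ρ = 1`.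
-/

open Set MeasureTheory intervalIntegral Complex

theorem MonotoneOn.intervalIntegral_abs_deriv_le {h : ℝ → ℝ} {c d : ℝ} (hcd : c ≤ d)
    (hh : MonotoneOn h (Icc c d)) : ∫ x in c..d, |deriv h x| ≤ h d - h c := by
  have hnonneg : ∀ x ∈ Ioo c d, 0 ≤ deriv h x := fun x hx => by
    rw [← derivWithin_of_mem_nhds (Icc_mem_nhds hx.1 hx.2)]
    exact hh.derivWithin_nonneg
  have habs : ∫ x in c..d, |deriv h x| = ∫ x in c..d, deriv h x := by
    rw [integral_of_le hcd, integral_of_le hcd, integral_Ioc_eq_integral_Ioo,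
      integral_Ioc_eq_integral_Ioo]
    exact setIntegral_congr_fun measurableSet_Ioo fun x hx => abs_of_nonneg (hnonneg x hx)
  rw [habs]
  rw [← uIcc_of_le hcd] at hh
  exact (hh.intervalIntegral_deriv_mem_uIcc).2.trans
    (max_le (sub_nonneg.2 (hh (by simp) (by simp) hcd)) le_rfl)

theorem intervalIntegral_abs_deriv_le_abs_sub {h : ℝ → ℝ} {c d : ℝ} (hcd : c ≤ d)
    (hh : MonotoneOn h (Icc c d) ∨ AntitoneOn h (Icc c d)) :
    ∫ x in c..d, |deriv h x| ≤ |h d - h c| := by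
  rcases hh with hh | hh
  · exact (hh.intervalIntegral_abs_deriv_le hcd).trans (le_abs_self _)
  · have := hh.neg.intervalIntegral_abs_deriv_le hcd
    simp only [deriv.fun_neg, abs_neg] at this
    rw [abs_sub_comm]
    linarith [le_abs_self (h c - h d)]

theorem intervalIntegrable_deriv_of_monotoneOn_or_antitoneOn {h : ℝ → ℝ} {c d : ℝ} (hcd : c ≤ d)
    (hh : MonotoneOn h (Icc c d) ∨ AntitoneOn h (Icc c d)) :
    IntervalIntegrable (deriv h) volume c d := by
  rw [← uIcc_of_le hcd] at hh
  rcases hh with hh | hh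
  · exact hh.intervalIntegrable_deriv
  · convert hh.neg.intervalIntegrable_deriv.neg using 1
    ext x
    simp

theorem ContinuousOn.pos_or_neg_of_ne_zero {f : ℝ → ℝ} {c d : ℝ} (hf : ContinuousOn f (Icc c d))
    (h0 : ∀ p ∈ Icc c d, f p ≠ 0) :
    (∀ p ∈ Icc c d, 0 < f p) ∨ (∀ p ∈ Icc c d, f p < 0) := by
  by_contra! ⟨⟨x, hx, hfx⟩, ⟨y, hy, hfy⟩⟩
  obtain ⟨z, hz, hfz⟩ := isPreconnected_Icc.intermediate_value hx hy hf ⟨hfx, hfy⟩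
  exact h0 z hz hfz

theorem monotoneOn_or_antitoneOn_inv {φ : ℝ → ℝ} {s : Set ℝ}
    (hφ : MonotoneOn φ s ∨ AntitoneOn φ s)
    (hsign : (∀ p ∈ s, 0 < φ p) ∨ (∀ p ∈ s, φ p < 0)) :
    MonotoneOn (fun p => (φ p)⁻¹) s ∨ AntitoneOn (fun p => (φ p)⁻¹) s := by
  have key : ∀ x ∈ s, ∀ y ∈ s, φ x ≤ φ y → (φ y)⁻¹ ≤ (φ x)⁻¹ := fun x hx y hy hxy => by
    rcases hsign with hpos | hneg
    · exact inv_anti₀ (hpos x hx) hxy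
    · exact (inv_le_inv_of_neg (hneg y hy) (hneg x hx)).2 hxy
  rcases hφ with hφ | hφ
  · exact Or.inr fun x hx y hy hxy => key x hx y hy (hφ hx hy hxy)
  · exact Or.inl fun x hx y hy hxy => key y hy x hx (hφ hx hy hxy)

theorem abs_inv_sub_inv_le_of_le_abs {x y κ : ℝ} (hκ : 0 < κ) (hxy : 0 < x * y)
    (hx : κ ≤ |x|) (hy : κ ≤ |y|) : |x⁻¹ - y⁻¹| ≤ κ⁻¹ := by
  have hx' : |x⁻¹| ≤ κ⁻¹ := abs_inv x ▸ inv_anti₀ hκ hx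
  have hy' : |y⁻¹| ≤ κ⁻¹ := abs_inv y ▸ inv_anti₀ hκ hy
  rw [abs_le] at hx' hy'
  rw [abs_sub_le_iff]
  rcases pos_and_pos_or_neg_and_neg_of_mul_pos hxy with ⟨hx0, hy0⟩ | ⟨hx0, hy0⟩
  · have := inv_pos.2 hx0; have := inv_pos.2 hy0
    constructor <;> linarith
  · have := inv_lt_zero.2 hx0; have := inv_lt_zero.2 hy0
    constructor <;> linarith

theorem norm_exp_I_mul_mul (ω x : ℝ) : ‖exp (I * ω * x)‖ = 1 := by
  rw [norm_exp]
  simp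

theorem integral_mul_exp_eq {ψ φ h' : ℝ → ℝ} {U U' : ℝ → ℂ} {c d ω : ℝ} (hcd : c ≤ d)
    (hψ : ∀ p ∈ Icc c d, HasDerivAt ψ (φ p) p) (hφc : ContinuousOn φ (Icc c d))
    (hφ0 : ∀ p ∈ Icc c d, φ p ≠ 0)
    (hh : ∀ p ∈ Ioo c d, HasDerivAt (fun q => (φ q)⁻¹) (h' p) p)
    (hh' : IntervalIntegrable h' volume c d)
    (hUc : ContinuousOn U (Icc c d)) (hU : ∀ p ∈ Ioo c d, HasDerivAt U (U' p) p)
    (hU' : IntervalIntegrable U' volume c d) :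
    I * ω * ∫ p in c..d, U p * exp (I * ω * ψ p) =
      (φ d)⁻¹ • U d * exp (I * ω * ψ d) - (φ c)⁻¹ • U c * exp (I * ω * ψ c) -
        ∫ p in c..d, ((φ p)⁻¹ • U' p + h' p • U p) * exp (I * ω * ψ p) := by
  set E : ℝ → ℂ := fun p => exp (I * ω * ψ p)
  have hE : ∀ p ∈ Icc c d, HasDerivAt E (I * ω * φ p * E p) p := fun p hp => by
    simpa [E, mul_comm, mul_assoc] using (((hψ p hp).ofReal_comp).const_mul (I * ω)).cexp
  have hEc : ContinuousOn E (Icc c d) := fun p hp => (hE p hp).continuousAt.continuousWithinAt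
  have hmin : Ioo (min c d) (max c d) = Ioo c d := by rw [min_eq_left hcd, max_eq_right hcd]
  rw [← uIcc_of_le hcd] at hφc hUc hEc
  have := integral_mul_deriv_eq_deriv_mul_of_hasDerivAt (a := c) (b := d)
    (u := fun p => (φ p)⁻¹ • U p) (v := E) ((hφc.inv₀ ?_).smul hUc) hEc
    (fun p hp => ((hh p (hmin ▸ hp)).smul (hU p (hmin ▸ hp))))
    (fun p hp => hE p (Ioo_subset_Icc_self (hmin ▸ hp)))
    ((hU'.continuousOn_smul (hφc.inv₀ ?_)).add (hh'.smul_continuousOn hUc))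
    ((continuousOn_const.mul (continuous_ofReal.comp_continuousOn hφc)).mul
      hEc).intervalIntegrable
  · rw [← this, ← intervalIntegral.integral_const_mul]
    refine integral_congr fun p hp => ?_
    have hφp : (φ p : ℂ) ≠ 0 := ofReal_ne_zero.2 (hφ0 p (uIcc_of_le hcd ▸ hp))
    simp only [E, real_smul, ofReal_inv]
    field_simp
  all_goals exact fun p hp => hφ0 p (uIcc_of_le hcd ▸ hp)

theorem norm_integral_mul_exp_le_of_variation {ψ φ h' : ℝ → ℝ} {U U' : ℝ → ℂ}
    {c d ω κ C : ℝ} (hcd : c ≤ d) (hω : 0 < ω) (hκ : 0 < κ)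
    (hψ : ∀ p ∈ Icc c d, HasDerivAt ψ (φ p) p) (hφc : ContinuousOn φ (Icc c d))
    (hφκ : ∀ p ∈ Icc c d, κ ≤ |φ p|)
    (hh : ∀ p ∈ Ioo c d, HasDerivAt (fun q => (φ q)⁻¹) (h' p) p)
    (hh' : IntervalIntegrable h' volume c d) (hvar : ∫ p in c..d, |h' p| ≤ κ⁻¹)
    (hUc : ContinuousOn U (Icc c d)) (hU : ∀ p ∈ Ioo c d, HasDerivAt U (U' p) p)
    (hU' : IntervalIntegrable U' volume c d) (hC : ∀ p ∈ Icc c d, ‖U p‖ ≤ C) :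
    ‖∫ p in c..d, U p * exp (I * ω * ψ p)‖ ≤
      (ω * κ)⁻¹ * (‖U c‖ + ‖U d‖ + C + ∫ p in c..d, ‖U' p‖) := by
  have hc : c ∈ Icc c d := left_mem_Icc.2 hcd
  have hd : d ∈ Icc c d := right_mem_Icc.2 hcd
  have hφ0 : ∀ p ∈ Icc c d, φ p ≠ 0 := fun p hp => abs_pos.1 (hκ.trans_le (hφκ p hp))
  have hinv : ∀ p ∈ Icc c d, |(φ p)⁻¹| ≤ κ⁻¹ := fun p hp =>
    abs_inv (φ p) ▸ inv_anti₀ hκ (hφκ p hp)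
  have hC0 : 0 ≤ C := (norm_nonneg _).trans (hC c hc)
  have hend : ∀ p ∈ Icc c d, ‖(φ p)⁻¹ • U p * exp (I * ω * ψ p)‖ ≤ κ⁻¹ * ‖U p‖ :=
    fun p hp => by
      rw [norm_mul, norm_exp_I_mul_mul, mul_one, norm_smul, Real.norm_eq_abs]
      exact mul_le_mul_of_nonneg_right (hinv p hp) (norm_nonneg _)
  have hrem : ‖∫ p in c..d, ((φ p)⁻¹ • U' p + h' p • U p) * exp (I * ω * ψ p)‖ ≤
      κ⁻¹ * (∫ p in c..d, ‖U' p‖) + C * κ⁻¹ := by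
    have hbound : IntervalIntegrable (fun p => κ⁻¹ * ‖U' p‖ + C * |h' p|) volume c d :=
      (hU'.norm.const_mul _).add (hh'.abs.const_mul _)
    refine (norm_integral_le_of_norm_le hcd (ae_of_all _ fun p hp => ?_) hbound).trans ?_
    · rw [norm_mul, norm_exp_I_mul_mul, mul_one]
      refine (norm_add_le _ _).trans ?_
      rw [norm_smul, norm_smul, Real.norm_eq_abs, Real.norm_eq_abs, mul_comm C]
      gcongr
      exacts [hinv p (Ioc_subset_Icc_self hp), hC p (Ioc_subset_Icc_self hp)]
    · rw [integral_add (hU'.norm.const_mul _) (hh'.abs.const_mul _),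
        intervalIntegral.integral_const_mul, intervalIntegral.integral_const_mul]
      linarith [mul_le_mul_of_nonneg_left hvar hC0]
  calc ‖∫ p in c..d, U p * exp (I * ω * ψ p)‖
      = ω⁻¹ * ‖I * ω * ∫ p in c..d, U p * exp (I * ω * ψ p)‖ := by
        rw [norm_mul, show ‖I * (ω : ℂ)‖ = ω by simp [hω.le], inv_mul_cancel_left₀ hω.ne']
    _ ≤ ω⁻¹ * (κ⁻¹ * ‖U d‖ + κ⁻¹ * ‖U c‖ + (κ⁻¹ * (∫ p in c..d, ‖U' p‖) + C * κ⁻¹)) := by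
        rw [integral_mul_exp_eq hcd hψ hφc hφ0 hh hh' hUc hU hU']
        gcongr
        exact (norm_sub_le _ _).trans (add_le_add ((norm_sub_le _ _).trans
          (add_le_add (hend d hd) (hend c hc))) hrem)
    _ = (ω * κ)⁻¹ * (‖U c‖ + ‖U d‖ + C + ∫ p in c..d, ‖U' p‖) := by
        rw [mul_inv]; ring

theorem norm_integral_mul_exp_le {ψ φ : ℝ → ℝ} {U U' : ℝ → ℂ} {c d ω κ C : ℝ} (hcd : c ≤ d)
    (hω : 0 < ω) (hκ : 0 < κ)
    (hψ : ∀ p ∈ Icc c d, HasDerivAt ψ (φ p) p) (hφc : ContinuousOn φ (Icc c d))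
    (hφd : ∀ p ∈ Ioo c d, DifferentiableAt ℝ φ p)
    (hφmono : MonotoneOn φ (Icc c d) ∨ AntitoneOn φ (Icc c d))
    (hφκ : ∀ p ∈ Icc c d, κ ≤ |φ p|)
    (hUc : ContinuousOn U (Icc c d)) (hU : ∀ p ∈ Ioo c d, HasDerivAt U (U' p) p)
    (hU' : IntervalIntegrable U' volume c d) (hC : ∀ p ∈ Icc c d, ‖U p‖ ≤ C) :
    ‖∫ p in c..d, U p * exp (I * ω * ψ p)‖ ≤
      (ω * κ)⁻¹ * (‖U c‖ + ‖U d‖ + C + ∫ p in c..d, ‖U' p‖) := by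
  have hc : c ∈ Icc c d := left_mem_Icc.2 hcd
  have hd : d ∈ Icc c d := right_mem_Icc.2 hcd
  have hφ0 : ∀ p ∈ Icc c d, φ p ≠ 0 := fun p hp => abs_pos.1 (hκ.trans_le (hφκ p hp))
  have hsign := hφc.pos_or_neg_of_ne_zero hφ0
  have hinv_mono := monotoneOn_or_antitoneOn_inv hφmono hsign
  have hvar : ∫ p in c..d, |deriv (fun q => (φ q)⁻¹) p| ≤ κ⁻¹ := by
    refine (intervalIntegral_abs_deriv_le_abs_sub hcd hinv_mono).trans
      (abs_inv_sub_inv_le_of_le_abs hκ ?_ (hφκ d hd) (hφκ c hc))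
    rcases hsign with hpos | hneg
    · exact mul_pos (hpos d hd) (hpos c hc)
    · exact mul_pos_of_neg_of_neg (hneg d hd) (hneg c hc)
  exact norm_integral_mul_exp_le_of_variation hcd hω hκ hψ hφc hφκ
    (fun p hp => ((hφd p hp).inv (hφ0 p (Ioo_subset_Icc_self hp))).hasDerivAt)
    (intervalIntegrable_deriv_of_monotoneOn_or_antitoneOn hcd hinv_mono) hvar hUc hU hU' hC

theorem norm_integral_smul_mul_exp_le {ψ φ w : ℝ → ℝ} {u u' : ℝ → ℂ} {c d ω κ M : ℝ}
    (hcd : c ≤ d) (hω : 0 < ω) (hκ : 0 < κ)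
    (hψ : ∀ p ∈ Icc c d, HasDerivAt ψ (φ p) p) (hφc : ContinuousOn φ (Icc c d))
    (hφd : ∀ p ∈ Ioo c d, DifferentiableAt ℝ φ p)
    (hφmono : MonotoneOn φ (Icc c d) ∨ AntitoneOn φ (Icc c d))
    (hφκ : ∀ p ∈ Icc c d, κ ≤ |φ p|)
    (hw0 : ∀ p ∈ Icc c d, 0 ≤ w p) (hw : AntitoneOn w (Icc c d))
    (hwc : ContinuousOn w (Icc c d)) (hwd : ∀ p ∈ Ioo c d, DifferentiableAt ℝ w p)
    (huc : ContinuousOn u (Icc c d)) (hu : ∀ p ∈ Ioo c d, HasDerivAt u (u' p) p)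
    (hu' : IntervalIntegrable u' volume c d) (hM : ∀ p ∈ Icc c d, ‖u p‖ ≤ M) :
    ‖∫ p in c..d, w p • u p * exp (I * ω * ψ p)‖ ≤
      (ω * κ)⁻¹ * (w c * (4 * M + ∫ p in c..d, ‖u' p‖)) := by
  have hc : c ∈ Icc c d := left_mem_Icc.2 hcd
  have hd : d ∈ Icc c d := right_mem_Icc.2 hcd
  have hM0 : 0 ≤ M := (norm_nonneg _).trans (hM c hc)
  have hwu : ∀ p ∈ Icc c d, ‖w p • u p‖ ≤ w c * M := fun p hp => by
    rw [norm_smul, Real.norm_of_nonneg (hw0 p hp)]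
    exact mul_le_mul (hw hc hp hp.1) (hM p hp) (norm_nonneg _) (hw0 c hc)
  have hw'i := intervalIntegrable_deriv_of_monotoneOn_or_antitoneOn hcd (Or.inr hw)
  have hw_var : ∫ p in c..d, |deriv w p| ≤ w c := by
    refine (intervalIntegral_abs_deriv_le_abs_sub hcd (Or.inr hw)).trans ?_
    rw [abs_sub_comm, abs_of_nonneg (sub_nonneg.2 (hw hc hd hcd))]
    linarith [hw0 d hd]
  have hU'i : IntervalIntegrable (fun p => w p • u' p + deriv w p • u p) volume c d := by
    rw [← uIcc_of_le hcd] at huc hwc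
    exact (hu'.continuousOn_smul hwc).add (hw'i.smul_continuousOn huc)
  have hbound : IntervalIntegrable (fun p => w c * ‖u' p‖ + M * |deriv w p|) volume c d :=
    (hu'.norm.const_mul _).add (hw'i.abs.const_mul _)
  have hderiv : ∫ p in c..d, ‖w p • u' p + deriv w p • u p‖ ≤ w c * (M + ∫ p in c..d, ‖u' p‖) := by
    refine (integral_mono_on hcd hU'i.norm hbound fun p hp => ?_).trans ?_
    · refine (norm_add_le _ _).trans ?_
      rw [norm_smul, norm_smul, Real.norm_of_nonneg (hw0 p hp), Real.norm_eq_abs, mul_comm M]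
      gcongr
      exacts [hw hc hp hp.1, hM p hp]
    · rw [integral_add (hu'.norm.const_mul _) (hw'i.abs.const_mul _),
        intervalIntegral.integral_const_mul, intervalIntegral.integral_const_mul]
      nlinarith [mul_le_mul_of_nonneg_left hw_var hM0]
  refine (norm_integral_mul_exp_le (U := fun p => w p • u p) hcd hω hκ hψ hφc hφd hφmono hφκ
    (hwc.smul huc)
    (fun p hp => ((hwd p hp).hasDerivAt.smul (hu p hp))) hU'i hwu).trans ?_
  gcongr
  linarith [hwu c hc, hwu d hd]

theorem intervalIntegrable_sub_rpow_sub_one {p₁ s μ : ℝ} (hμ : 0 < μ) :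
    IntervalIntegrable (fun p => (p - p₁) ^ (μ - 1)) volume p₁ s := by
  simpa using (intervalIntegrable_rpow' (a := 0) (b := s - p₁) (by linarith)).comp_sub_right p₁

theorem norm_integral_le_of_norm_le_rpow {f : ℝ → ℂ} {p₁ s μ δ M : ℝ} (hμ : 0 < μ) (hM : 0 ≤ M)
    (hs : p₁ ≤ s) (hsδ : s ≤ p₁ + δ) (hf : ∀ p ∈ Ioc p₁ s, ‖f p‖ ≤ (p - p₁) ^ (μ - 1) * M) :
    ‖∫ p in p₁..s, f p‖ ≤ M * δ ^ μ / μ := by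
  have hval : ∫ p in p₁..s, (p - p₁) ^ (μ - 1) = (s - p₁) ^ μ / μ := by
    rw [intervalIntegral.integral_comp_sub_right (fun x => x ^ (μ - 1)), sub_self,
      integral_rpow (Or.inl (by linarith)), sub_add_cancel, Real.zero_rpow hμ.ne', sub_zero]
  calc ‖∫ p in p₁..s, f p‖ ≤ ∫ p in p₁..s, (p - p₁) ^ (μ - 1) * M :=
        norm_integral_le_of_norm_le hs (ae_of_all _ hf)
          ((intervalIntegrable_sub_rpow_sub_one hμ).mul_const M)
    _ = M * (s - p₁) ^ μ / μ := by rw [intervalIntegral.integral_mul_const, hval]; ring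
    _ ≤ M * δ ^ μ / μ := by
        gcongr
        linarith

theorem norm_integral_le_sum_of_mem_Icc {f : ℝ → ℂ} {p₁ p₂ s u v : ℝ}
    (hf : IntervalIntegrable f volume p₁ p₂) (hs : s ∈ Icc p₁ p₂) (hu : u ∈ Icc p₁ p₂)
    (hv : v ∈ Icc p₁ p₂) :
    ‖∫ p in p₁..p₂, f p‖ ≤ ‖∫ p in p₁..s, f p‖ + ‖∫ p in s..u, f p‖ + ‖∫ p in u..v, f p‖ +
      ‖∫ p in v..p₂, f p‖ := by
  have hp₁₂ : p₁ ≤ p₂ := hs.1.trans hs.2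
  have hint : ∀ x ∈ Icc p₁ p₂, ∀ y ∈ Icc p₁ p₂, IntervalIntegrable f volume x y :=
    fun x hx y hy => hf.mono_set (uIcc_subset_uIcc (uIcc_of_le hp₁₂ ▸ hx) (uIcc_of_le hp₁₂ ▸ hy))
  have hp₁ : p₁ ∈ Icc p₁ p₂ := left_mem_Icc.2 hp₁₂
  have hp₂ : p₂ ∈ Icc p₁ p₂ := right_mem_Icc.2 hp₁₂
  rw [← integral_add_adjacent_intervals (hint _ hp₁ _ hv) (hint _ hv _ hp₂),
    ← integral_add_adjacent_intervals (hint _ hp₁ _ hu) (hint _ hu _ hv),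
    ← integral_add_adjacent_intervals (hint _ hp₁ _ hs) (hint _ hs _ hu)]
  exact (norm_add_le _ _).trans (add_le_add ((norm_add_le _ _).trans
    (add_le_add (norm_add_le _ _) le_rfl)) le_rfl)

theorem norm_integral_le_of_norm_le_rpow_of_sub_le {f : ℝ → ℂ} {p₁ u v μ δ M : ℝ}
    (hμ : μ ≤ 1) (hδ : 0 < δ) (hM : 0 ≤ M) (huv : u ≤ v) (hvu : v ≤ u + 2 * δ)
    (hf : ∀ p ∈ Ioc u v, p₁ + δ ≤ p ∧ ‖f p‖ ≤ (p - p₁) ^ (μ - 1) * M) :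
    ‖∫ p in u..v, f p‖ ≤ 2 * M * δ ^ μ := by
  have hbound : ∀ p ∈ uIoc u v, ‖f p‖ ≤ δ ^ (μ - 1) * M := fun p hp => by
    obtain ⟨hp₁, hfp⟩ := hf p (uIoc_of_le huv ▸ hp)
    exact hfp.trans (mul_le_mul_of_nonneg_right
      (Real.rpow_le_rpow_of_nonpos hδ (by linarith) (by linarith)) hM)
  calc ‖∫ p in u..v, f p‖ ≤ δ ^ (μ - 1) * M * |v - u| :=
        norm_integral_le_of_norm_le_const hbound
    _ ≤ δ ^ (μ - 1) * M * (2 * δ) := by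
        gcongr
        rw [abs_of_nonneg (by linarith)]
        linarith
    _ = 2 * M * δ ^ μ := by rw [Real.rpow_sub_one hδ.ne']; field_simp

theorem norm_integral_le_of_bound_off_windows {f : ℝ → ℂ} {p₀ p₁ p₂ μ δ M K : ℝ}
    (hμ : μ ∈ Ioc (0 : ℝ) 1) (hδ : 0 < δ) (hM : 0 ≤ M) (hK : 0 ≤ K) (hp₀ : p₀ ∈ Icc p₁ p₂)
    (hf : IntervalIntegrable f volume p₁ p₂)
    (hsing : ∀ p ∈ Ioc p₁ p₂, ‖f p‖ ≤ (p - p₁) ^ (μ - 1) * M)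
    (hleft : ∀ c d, p₁ + δ ≤ c → c ≤ d → d ≤ p₀ - δ → ‖∫ p in c..d, f p‖ ≤ K)
    (hright : ∀ c d, p₀ + δ ≤ c → c ≤ d → d ≤ p₂ → ‖∫ p in c..d, f p‖ ≤ K) :
    ‖∫ p in p₁..p₂, f p‖ ≤ M * δ ^ μ / μ + 2 * M * δ ^ μ + 2 * K := by
  obtain ⟨hp₁₀, hp₀₂⟩ := hp₀
  -- `p₁ + δ`, `p₀ - δ`, `p₀ + δ`, clamped so that `p₁ ≤ s ≤ u ≤ v ≤ p₂`
  set s := min (p₁ + δ) p₂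
  set u := max s (p₀ - δ)
  set v := max s (min (p₀ + δ) p₂)
  have hs₁ : p₁ ≤ s := le_min (by linarith) (hp₁₀.trans hp₀₂)
  have hs₂ : s ≤ p₂ := min_le_right _ _
  have hsu : s ≤ u := le_max_left _ _
  have hu : u ≤ p₂ := max_le hs₂ (by linarith)
  have huv : u ≤ v := max_le (le_max_left _ _)
    ((le_min (by linarith) (by linarith)).trans (le_max_right _ _))
  have hv : v ≤ p₂ := max_le hs₂ (min_le_right _ _)
  have hs_of_lt : ∀ p, s < p → p ≤ p₂ → p₁ + δ ≤ s := fun p hsp hp =>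
    le_min le_rfl (le_of_not_gt fun h => by
      have : s = p₂ := min_eq_right h.le
      linarith)
  have h₁ : ‖∫ p in p₁..s, f p‖ ≤ M * δ ^ μ / μ :=
    norm_integral_le_of_norm_le_rpow hμ.1 hM hs₁ (min_le_left _ _)
      fun p hp => hsing p ⟨hp.1, hp.2.trans hs₂⟩
  have h₂ : ‖∫ p in s..u, f p‖ ≤ K := by
    rcases hsu.eq_or_lt with h | h
    · rw [h, integral_same, norm_zero]; exact hK
    · exact hleft s u (hs_of_lt u h hu) hsu
        (max_le ((lt_max_iff.1 h).resolve_left (lt_irrefl s)).le le_rfl)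
  have h₃ : ‖∫ p in u..v, f p‖ ≤ 2 * M * δ ^ μ := by
    refine norm_integral_le_of_norm_le_rpow_of_sub_le hμ.2 hδ hM huv
      (max_le (by linarith) ((min_le_left _ _).trans (by linarith [le_max_right s (p₀ - δ)])))
      fun p hp => ⟨(hs_of_lt p (hsu.trans_lt hp.1) (hp.2.trans hv)).trans (hsu.trans hp.1.le),
        hsing p ⟨by linarith [hs₁, hsu, hp.1], hp.2.trans hv⟩⟩
  have h₄ : ‖∫ p in v..p₂, f p‖ ≤ K := by
    rcases hv.eq_or_lt with h | h
    · rw [h, integral_same, norm_zero]; exact hK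
    · have hmin : min (p₀ + δ) p₂ < p₂ := (le_max_right _ _).trans_lt h
      exact hright v p₂ (le_max_of_le_right (le_min le_rfl
        ((min_lt_iff.1 hmin).resolve_right (lt_irrefl _)).le)) hv le_rfl
  have := norm_integral_le_sum_of_mem_Icc hf ⟨hs₁, hs₂⟩ ⟨hs₁.trans hsu, hu⟩
    ⟨hs₁.trans (hsu.trans huv), hv⟩
  linarith

theorem norm_integral_rpow_smul_mul_exp_le {ψ φ : ℝ → ℝ} {u u' : ℝ → ℂ}
    {p₁ μ c d ω κ M : ℝ} (hμ : μ ≤ 1) (hp₁c : p₁ < c) (hcd : c ≤ d) (hω : 0 < ω) (hκ : 0 < κ)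
    (hψ : ∀ p ∈ Icc c d, HasDerivAt ψ (φ p) p) (hφc : ContinuousOn φ (Icc c d))
    (hφd : ∀ p ∈ Ioo c d, DifferentiableAt ℝ φ p)
    (hφmono : MonotoneOn φ (Icc c d) ∨ AntitoneOn φ (Icc c d))
    (hφκ : ∀ p ∈ Icc c d, κ ≤ |φ p|)
    (huc : ContinuousOn u (Icc c d)) (hu : ∀ p ∈ Ioo c d, HasDerivAt u (u' p) p)
    (hu' : IntervalIntegrable u' volume c d) (hM : ∀ p ∈ Icc c d, ‖u p‖ ≤ M) :
    ‖∫ p in c..d, (p - p₁) ^ (μ - 1) • u p * exp (I * ω * ψ p)‖ ≤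
      (ω * κ)⁻¹ * ((c - p₁) ^ (μ - 1) * (4 * M + ∫ p in c..d, ‖u' p‖)) := by
  have hpos : ∀ p ∈ Icc c d, 0 < p - p₁ := fun p hp => by linarith [hp.1]
  refine norm_integral_smul_mul_exp_le hcd hω hκ hψ hφc hφd hφmono hφκ
    (fun p hp => Real.rpow_nonneg (hpos p hp).le _)
    (fun p hp q hq hpq => Real.rpow_le_rpow_of_nonpos (hpos p hp) (by linarith) (by linarith))
    ((continuousOn_id.sub continuousOn_const).rpow_const fun p hp => Or.inl (hpos p hp).ne')
    (fun p hp => (differentiableAt_id.sub_const p₁).rpow_const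
      (Or.inl (hpos p (Ioo_subset_Icc_self hp)).ne'))
    huc hu hu' hM

theorem norm_integral_off_windows_le {ψ ψt : ℝ → ℝ} {U ut : ℝ → ℂ}
    {ρ μ a b p₀ p₁ p₂ ω δ m M c d : ℝ} (hρ : 1 ≤ ρ) (hμ : μ ∈ Ioc (0 : ℝ) 1) (hω : 0 < ω)
    (hδ : 0 < δ) (hωδ : ω * δ ^ ρ = 1) (hI : Icc p₁ p₂ ⊆ Ioo a b)
    (hψ1 : ContDiffOn ℝ 1 ψ (Ioo a b)) (hψ2 : ContDiffOn ℝ 2 ψ (Ioo a b \ {p₀}))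
    (hfact : ∀ p ∈ Ioo a b, deriv ψ p = |p - p₀| ^ (ρ - 1) * ψt p)
    (hm0 : 0 < m) (hm : ∀ p ∈ Icc p₁ p₂, m ≤ |ψt p|)
    (hU : ∀ p ∈ Ioc p₁ p₂, U p = ((p - p₁) ^ (μ - 1) : ℝ) * ut p)
    (hutc : ContinuousOn ut (Icc p₁ p₂))
    (hutd : ∀ p ∈ Ioo p₁ p₂, DifferentiableAt ℝ ut p)
    (hutint : IntervalIntegrable (deriv ut) volume p₁ p₂)
    (hM : ∀ p ∈ Icc p₁ p₂, ‖ut p‖ ≤ M)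
    (hc : p₁ + δ ≤ c) (hcd : c ≤ d) (hd : d ≤ p₂) (hdist : ∀ p ∈ Icc c d, δ ≤ |p - p₀|)
    (hmono : MonotoneOn (deriv ψ) (Icc c d) ∨ AntitoneOn (deriv ψ) (Icc c d)) :
    ‖∫ p in c..d, U p * exp (I * ω * ψ p)‖ ≤
      δ ^ μ / m * (4 * M + ∫ p in p₁..p₂, ‖deriv ut p‖) := by
  have hp₁c : p₁ < c := by linarith
  have hsub : Icc c d ⊆ Icc p₁ p₂ := Icc_subset_Icc hp₁c.le hd
  have hsubI : Icc c d ⊆ Ioo a b \ {p₀} := fun p hp =>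
    ⟨hI (hsub hp), fun h => by simpa [show p = p₀ from h] using hδ.trans_le (hdist p hp)⟩
  have hOpen : IsOpen (Ioo a b \ {p₀}) := isOpen_Ioo.sdiff isClosed_singleton
  have hφκ : ∀ p ∈ Icc c d, δ ^ (ρ - 1) * m ≤ |deriv ψ p| := fun p hp => by
    rw [hfact p (hI (hsub hp)), abs_mul, abs_of_nonneg (by positivity)]
    exact mul_le_mul (Real.rpow_le_rpow hδ.le (hdist p hp) (by linarith)) (hm p (hsub hp))
      hm0.le (by positivity)
  have hscale : (ω * (δ ^ (ρ - 1) * m))⁻¹ * δ ^ (μ - 1) = δ ^ μ / m := by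
    rw [Real.rpow_sub_one hδ.ne', Real.rpow_sub_one hδ.ne']
    field_simp
    exact hωδ.symm
  have hV := integral_mono_interval hp₁c.le hcd hd
    (ae_of_all _ fun p => norm_nonneg (deriv ut p)) hutint.norm
  have hM0 : 0 ≤ M := (norm_nonneg _).trans (hM c (hsub (left_mem_Icc.2 hcd)))
  have hV0 : 0 ≤ ∫ p in c..d, ‖deriv ut p‖ := integral_nonneg hcd fun p _ => norm_nonneg _
  rw [integral_congr fun p hp => by
    rw [hU p ⟨hp₁c.trans_le (uIcc_of_le hcd ▸ hp).1, ((uIcc_of_le hcd ▸ hp).2.trans hd)⟩,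
      ← real_smul]]
  refine (norm_integral_rpow_smul_mul_exp_le hμ.2 hp₁c hcd hω (by positivity)
    (fun p hp => ((hψ1.differentiableOn one_ne_zero).differentiableAt
      (isOpen_Ioo.mem_nhds (hI (hsub hp)))).hasDerivAt)
    ((hψ1.continuousOn_deriv_of_isOpen isOpen_Ioo le_rfl).mono (hsub.trans hI))
    (fun p hp => ((hψ2.deriv_of_isOpen hOpen (m := 1) (by norm_num)).differentiableOn
      one_ne_zero).differentiableAt (hOpen.mem_nhds (hsubI (Ioo_subset_Icc_self hp))))
    hmono hφκ (hutc.mono hsub)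
    (fun p hp => (hutd p (Ioo_subset_Ioo hp₁c.le hd hp)).hasDerivAt)
    (hutint.mono_set (by
      rw [uIcc_of_le hcd, uIcc_of_le (hp₁c.le.trans (hcd.trans hd))]; exact hsub))
    (fun p hp => hM p (hsub hp))).trans ?_
  rw [← hscale, mul_assoc]
  refine mul_le_mul_of_nonneg_left (mul_le_mul
    (Real.rpow_le_rpow_of_nonpos hδ (by linarith) (by linarith [hμ.2]))
    (by linarith) (by positivity) (by positivity)) (by positivity)

theorem norm_le_iSup_Icc_of_continuousOn {E : Type*} [NormedAddCommGroup E] {f : ℝ → E}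
    {c d : ℝ} (hf : ContinuousOn f (Icc c d)) :
    ∀ p ∈ Icc c d, ‖f p‖ ≤ ⨆ q : Icc c d, ‖f q‖ := fun p hp => by
  obtain ⟨C, hC⟩ := isCompact_Icc.exists_bound_of_continuousOn hf
  exact le_ciSup ⟨C, by rintro _ ⟨q, rfl⟩; exact hC q q.2⟩ (⟨p, hp⟩ : Icc c d)

theorem iInf_Icc_pos_of_continuousOn {g : ℝ → ℝ} {c d : ℝ} (hcd : c ≤ d)
    (hg : ContinuousOn g (Icc c d)) (hpos : ∀ p ∈ Icc c d, 0 < g p) :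
    0 < ⨅ q : Icc c d, g q := by
  obtain ⟨q, hq, hmin⟩ := isCompact_Icc.exists_isMinOn (nonempty_Icc.2 hcd) hg
  have : Nonempty (Icc c d) := ⟨⟨q, hq⟩⟩
  exact (hpos q hq).trans_le (le_ciInf fun p => hmin p.2)

theorem intervalIntegrable_mul_exp_of_eq_rpow_mul {ψ : ℝ → ℝ} {U ut : ℝ → ℂ}
    {p₁ p₂ μ ω : ℝ} (hμ : 0 < μ) (hp₁₂ : p₁ ≤ p₂) (hψ : ContinuousOn ψ (Icc p₁ p₂))
    (hU : ∀ p ∈ Ioc p₁ p₂, U p = ((p - p₁) ^ (μ - 1) : ℝ) * ut p)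
    (hutc : ContinuousOn ut (Icc p₁ p₂)) :
    IntervalIntegrable (fun p => U p * exp (I * ω * ψ p)) volume p₁ p₂ := by
  have hE : ContinuousOn (fun p => ut p * exp (I * ω * ψ p)) (uIcc p₁ p₂) := by
    rw [uIcc_of_le hp₁₂]
    exact hutc.mul (continuous_exp.comp_continuousOn (continuousOn_const.mul
      (continuous_ofReal.comp_continuousOn hψ)))
  refine ((intervalIntegrable_sub_rpow_sub_one hμ).smul_continuousOn hE).congr fun p hp => ?_
  rw [uIoc_of_le hp₁₂] at hp
  simp [hU p hp, real_smul, mul_assoc]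

theorem norm_integral_le_of_mul_rpow_eq_one {ψ ψt : ℝ → ℝ} {U ut : ℝ → ℂ}
    {ρ μ a b p₀ p₁ p₂ ω δ m M : ℝ} (hρ : 1 ≤ ρ) (hμ : μ ∈ Ioc (0 : ℝ) 1) (hω : 0 < ω)
    (hδ : 0 < δ) (hωδ : ω * δ ^ ρ = 1) (hI : Icc p₁ p₂ ⊆ Ioo a b) (hp₀ : p₀ ∈ Icc p₁ p₂)
    (hψ1 : ContDiffOn ℝ 1 ψ (Ioo a b)) (hψ2 : ContDiffOn ℝ 2 ψ (Ioo a b \ {p₀}))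
    (hfact : ∀ p ∈ Ioo a b, deriv ψ p = |p - p₀| ^ (ρ - 1) * ψt p)
    (hmono₁ : MonotoneOn (deriv ψ) {p ∈ Ioo a b | p < p₀} ∨
      AntitoneOn (deriv ψ) {p ∈ Ioo a b | p < p₀})
    (hmono₂ : MonotoneOn (deriv ψ) {p ∈ Ioo a b | p₀ < p} ∨
      AntitoneOn (deriv ψ) {p ∈ Ioo a b | p₀ < p})
    (hm0 : 0 < m) (hm : ∀ p ∈ Icc p₁ p₂, m ≤ |ψt p|)
    (hU : ∀ p ∈ Ioc p₁ p₂, U p = ((p - p₁) ^ (μ - 1) : ℝ) * ut p)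
    (hutc : ContinuousOn ut (Icc p₁ p₂))
    (hutd : ∀ p ∈ Ioo p₁ p₂, DifferentiableAt ℝ ut p)
    (hutint : IntervalIntegrable (deriv ut) volume p₁ p₂)
    (hM : ∀ p ∈ Icc p₁ p₂, ‖ut p‖ ≤ M) :
    ‖∫ p in p₁..p₂, U p * exp (I * ω * ψ p)‖ ≤ M * δ ^ μ / μ + 2 * M * δ ^ μ +
      2 * (δ ^ μ / m * (4 * M + ∫ p in p₁..p₂, ‖deriv ut p‖)) := by
  have hp₁₂ : p₁ ≤ p₂ := hp₀.1.trans hp₀.2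
  have hM0 : 0 ≤ M := (norm_nonneg _).trans (hM p₁ (left_mem_Icc.2 hp₁₂))
  have hV0 : 0 ≤ ∫ p in p₁..p₂, ‖deriv ut p‖ := integral_nonneg hp₁₂ fun p _ => norm_nonneg _
  have hsing : ∀ p ∈ Ioc p₁ p₂, ‖U p * exp (I * ω * ψ p)‖ ≤ (p - p₁) ^ (μ - 1) * M :=
    fun p hp => by
      have hpos : 0 ≤ (p - p₁) ^ (μ - 1) := Real.rpow_nonneg (by linarith [hp.1]) _
      rw [norm_mul, norm_exp_I_mul_mul, mul_one, hU p hp, norm_mul, norm_real,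
        Real.norm_of_nonneg hpos]
      exact mul_le_mul_of_nonneg_left (hM p (Ioc_subset_Icc_self hp)) hpos
  have hleft : ∀ c d, p₁ + δ ≤ c → c ≤ d → d ≤ p₀ - δ → ‖∫ p in c..d, U p * exp (I * ω * ψ p)‖ ≤
      δ ^ μ / m * (4 * M + ∫ p in p₁..p₂, ‖deriv ut p‖) := fun c d hc hcd hd => by
    have hsub : Icc c d ⊆ {p ∈ Ioo a b | p < p₀} := fun p hp =>
      ⟨hI ⟨by linarith [hp.1], by linarith [hp.2, hp₀.2]⟩, by linarith [hp.2]⟩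
    refine norm_integral_off_windows_le hρ hμ hω hδ hωδ hI hψ1 hψ2 hfact hm0 hm hU hutc hutd
      hutint hM hc hcd (by linarith [hp₀.2]) (fun p hp => ?_)
      (hmono₁.imp (·.mono hsub) (·.mono hsub))
    rw [abs_sub_comm, abs_of_pos (by linarith [hp.2])]
    linarith [hp.2]
  have hright : ∀ c d, p₀ + δ ≤ c → c ≤ d → d ≤ p₂ → ‖∫ p in c..d, U p * exp (I * ω * ψ p)‖ ≤
      δ ^ μ / m * (4 * M + ∫ p in p₁..p₂, ‖deriv ut p‖) := fun c d hc hcd hd => by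
    have hsub : Icc c d ⊆ {p ∈ Ioo a b | p₀ < p} := fun p hp =>
      ⟨hI ⟨by linarith [hp.1, hp₀.1], hp.2.trans hd⟩, by linarith [hp.1]⟩
    refine norm_integral_off_windows_le hρ hμ hω hδ hωδ hI hψ1 hψ2 hfact hm0 hm hU hutc hutd
      hutint hM (by linarith [hp₀.1]) hcd hd (fun p hp => ?_)
      (hmono₂.imp (·.mono hsub) (·.mono hsub))
    rw [abs_of_pos (by linarith [hp.1])]
    linarith [hp.1]
  exact norm_integral_le_of_bound_off_windows hμ hδ hM0 (by positivity) hp₀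
    (intervalIntegrable_mul_exp_of_eq_rpow_mul hμ.1 hp₁₂ (hψ1.continuousOn.mono hI) hU hutc)
    hsing hleft hright

theorem stmt_8_general (ρ μ a b p₁ p₂ p₀ : ℝ) (hρ : 1 < ρ) (hμ : μ ∈ Set.Ioc (0:ℝ) 1)
    (hI : Set.Icc p₁ p₂ ⊆ Set.Ioo a b) (hp₀ : p₀ ∈ Set.Icc p₁ p₂)
    (ψ ψt : ℝ → ℝ)
    (hψ1 : ContDiffOn ℝ 1 ψ (Set.Ioo a b))
    (hψ2 : ContDiffOn ℝ 2 ψ (Set.Ioo a b \ {p₀}))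
    (hfact : ∀ p ∈ Set.Ioo a b, deriv ψ p = |p - p₀| ^ (ρ - 1) * ψt p)
    (hψtc : ContinuousOn (fun p => |ψt p|) (Set.Ioo a b))
    (hψt0 : ∀ p ∈ Set.Ioo a b, ψt p ≠ 0)
    (hmono₁ : MonotoneOn (deriv ψ) {p ∈ Set.Ioo a b | p < p₀} ∨
      AntitoneOn (deriv ψ) {p ∈ Set.Ioo a b | p < p₀})
    (hmono₂ : MonotoneOn (deriv ψ) {p ∈ Set.Ioo a b | p₀ < p} ∨
      AntitoneOn (deriv ψ) {p ∈ Set.Ioo a b | p₀ < p})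
    (U ut : ℝ → ℂ)
    (hU : ∀ p ∈ Set.Ioc p₁ p₂, U p = ((p - p₁) ^ (μ - 1) : ℝ) * ut p)
    (hutc : ContinuousOn ut (Set.Icc p₁ p₂))
    (hutd : ∀ p ∈ Set.Ioo p₁ p₂, DifferentiableAt ℝ ut p)
    (hutint : IntervalIntegrable (deriv ut) volume p₁ p₂) :
    ∀ ω : ℝ, 0 < ω →
      ‖∫ p in p₁..p₂, U p * Complex.exp (Complex.I * ω * ψ p)‖ ≤
        ((3 / μ) * (⨆ p : Set.Icc p₁ p₂, ‖ut p‖) +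
          (8 * (⨆ p : Set.Icc p₁ p₂, ‖ut p‖) +
            2 * ∫ p in p₁..p₂, ‖deriv ut p‖) *
          (⨅ p : Set.Icc p₁ p₂, |ψt p|)⁻¹) * ω ^ (-(μ / ρ)) := by
  intro ω hω
  set M := ⨆ p : Icc p₁ p₂, ‖ut p‖
  set m := ⨅ p : Icc p₁ p₂, |ψt p|
  have hM := norm_le_iSup_Icc_of_continuousOn hutc
  have hm0 : 0 < m := iInf_Icc_pos_of_continuousOn (hp₀.1.trans hp₀.2) (hψtc.mono hI)
    fun p hp => abs_pos.2 (hψt0 p (hI hp))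
  have hm : ∀ p ∈ Icc p₁ p₂, m ≤ |ψt p| := fun p hp =>
    ciInf_le ⟨0, by rintro _ ⟨q, rfl⟩; exact abs_nonneg _⟩ (⟨p, hp⟩ : Icc p₁ p₂)
  set δ := ω ^ (-1 / ρ)
  have hδμ : δ ^ μ = ω ^ (-(μ / ρ)) := by rw [← Real.rpow_mul hω.le]; ring_nf
  have hωδ : ω * δ ^ ρ = 1 := by
    rw [← Real.rpow_mul hω.le, div_mul_cancel₀ _ (by linarith), Real.rpow_neg_one,
      mul_inv_cancel₀ hω.ne']
  have hM0 : 0 ≤ M := (norm_nonneg _).trans (hM p₁ (left_mem_Icc.2 (hp₀.1.trans hp₀.2)))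
  have hMμ : M * δ ^ μ ≤ M * δ ^ μ / μ := le_div_self (by positivity) hμ.1 hμ.2
  calc _ ≤ M * δ ^ μ / μ + 2 * M * δ ^ μ +
        2 * (δ ^ μ / m * (4 * M + ∫ p in p₁..p₂, ‖deriv ut p‖)) :=
      norm_integral_le_of_mul_rpow_eq_one hρ.le hμ hω (by positivity) hωδ hI hp₀ hψ1 hψ2 hfact
        hmono₁ hmono₂ hm0 hm hU hutc hutd hutint hM
    _ ≤ 3 * (M * δ ^ μ / μ) + 2 * (δ ^ μ / m * (4 * M + ∫ p in p₁..p₂, ‖deriv ut p‖)) := by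
      linarith
    _ = _ := by rw [← hδμ]; ring

/-- Extension of the van der Corput Lemma: phase with a stationary point `p₀`
of order `ρ - 1` (anywhere in the open interval `I = (a,b) ⊇ [p₁,p₂]`) and
amplitude with an integrable singular point of strength `μ - 1` at `p₁`. -/
theorem stmt_8 (ρ μ a b p₁ p₂ p₀ : ℝ) (hρ : 1 < ρ) (hμ : μ ∈ Set.Ioc (0:ℝ) 1)
    (hI : Set.Icc p₁ p₂ ⊆ Set.Ioo a b) (hp : p₁ < p₂) (hp₀ : p₀ ∈ Set.Icc p₁ p₂)
    (ψ ψt : ℝ → ℝ)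
    (hψ1 : ContDiffOn ℝ 1 ψ (Set.Ioo a b))
    (hψ2 : ContDiffOn ℝ 2 ψ (Set.Ioo a b \ {p₀}))
    (hfact : ∀ p ∈ Set.Ioo a b, deriv ψ p = |p - p₀| ^ (ρ - 1) * ψt p)
    (hψtc : ContinuousOn (fun p => |ψt p|) (Set.Ioo a b))
    (hψt0 : ∀ p ∈ Set.Ioo a b, ψt p ≠ 0)
    (hmono₁ : MonotoneOn (deriv ψ) {p ∈ Set.Ioo a b | p < p₀} ∨
      AntitoneOn (deriv ψ) {p ∈ Set.Ioo a b | p < p₀})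
    (hmono₂ : MonotoneOn (deriv ψ) {p ∈ Set.Ioo a b | p₀ < p} ∨
      AntitoneOn (deriv ψ) {p ∈ Set.Ioo a b | p₀ < p})
    (U ut : ℝ → ℂ)
    (hU : ∀ p ∈ Set.Ioc p₁ p₂, U p = ((p - p₁) ^ (μ - 1) : ℝ) * ut p)
    (hutc : ContinuousOn ut (Set.Icc p₁ p₂))
    (hutd : ∀ p ∈ Set.Ioo p₁ p₂, DifferentiableAt ℝ ut p)
    (hutint : IntervalIntegrable (deriv ut) volume p₁ p₂)
    (hut0 : μ ≠ 1 → ut p₁ ≠ 0) :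
    ∀ ω : ℝ, 0 < ω →
      ‖∫ p in p₁..p₂, U p * Complex.exp (Complex.I * ω * ψ p)‖ ≤
        ((3 / μ) * (⨆ p : Set.Icc p₁ p₂, ‖ut p‖) +
          (8 * (⨆ p : Set.Icc p₁ p₂, ‖ut p‖) +
            2 * ∫ p in p₁..p₂, ‖deriv ut p‖) *
          (⨅ p : Set.Icc p₁ p₂, |ψt p|)⁻¹) * ω ^ (-(μ / ρ)) :=
  stmt_8_general ρ μ a b p₁ p₂ p₀ hρ hμ hI hp₀ ψ ψt hψ1 hψ2 hfact hψtc hψt0 hmono₁ hmono₂ U ut hU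
    hutc hutd hutint
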